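/- arXiv:1711.02906 — 4 statements merged into one kernel-verified Lean document; each statement's English description precedes it below -/
import Mathlib

section
/- Consider a formal variable ζ satisfying the degree-d relation ζ^d = Σ_{i=1}^{d} (−1)^{i−1} σ_i^{(d)} h^i ζ^{d−i}, where h is a commuting variable and σ_i^{(d)} = σ_i^{(d)}(k_1,…,k_d). Then for every m ≥ d, ζ^m = Σ_{i=1}^{d} β_{m,i} h^{m−d+i} ζ^{d−i}, where β_{m,i} = Σ_{j=0}^{i−1} (−1)^j σ_j^{(d)} W_{m−d+i−j}^{(d)}. -/
/-- Complete homogeneous (Wronski) symmetric function of degree `δ` in `d` variables. -/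
def wronski {R : Type*} [CommSemiring R] (d δ : ℕ) (k : Fin d → R) : R :=
  ∑ a ∈ Finset.Nat.antidiagonalTuple d δ, ∏ j, k j ^ a j

/-- Elementary symmetric function of degree `i` in `d` variables. -/
def esymm {R : Type*} [CommSemiring R] (d i : ℕ) (k : Fin d → R) : R :=
  ∑ s ∈ (Finset.univ : Finset (Fin d)).powersetCard i, ∏ j ∈ s, k j

/-- `β_{m,i} = ∑_{j=0}^{i−1} (−1)^j σ_j W_{m−d+i−j}`. -/
def beta {R : Type*} [CommRing R] (d : ℕ) (k : Fin d → R) (m i : ℕ) : R :=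
  ∑ j ∈ Finset.range i, (-1 : R) ^ j * esymm d j k * wronski d (m - d + i - j) k


/-! The generating functions `E(x) = ∏ (1 - k_l x)` and `H(x) = ∏ (1 - k_l x)⁻¹` of the `σ_j`
and the `W_j` are mutually inverse, so `∑_{j ≤ n} (-1)^j σ_j W_{n-j} = 0` for `n > 0`. This yields
`β_{d,i} = (-1)^(i-1) σ_i`, `β_{m,d+1} = 0` and `β_{m+1,i} = β_{m,i+1} - (-1)^i σ_i β_{m,1}`,
which is exactly the recurrence obtained by multiplying the expansion of `ζ^m` by `ζ` and
reducing `ζ^d` by the relation. -/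

open Finset

section PowerSeries

open PowerSeries

variable {R : Type*} [CommRing R]

lemma one_sub_C_mul_X_mul_mk_pow (a : R) : (1 - C a * X) * PowerSeries.mk (a ^ ·) = 1 := by
  simpa [rescale_mk, mul_comm] using congrArg (rescale a) (mk_one_mul_one_sub_eq_one R)

variable {d : ℕ} (k : Fin d → R)

lemma coeff_prod_mk_pow (n : ℕ) : coeff n (∏ l, PowerSeries.mk (k l ^ ·)) = wronski d n k := by
  classical
  rw [coeff_prod, wronski]
  refine sum_equiv Finsupp.equivFunOnFinite (fun l => ?_) (fun l _ => by simp)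
  simp [Nat.mem_antidiagonalTuple]

lemma coeff_prod_one_sub_C_mul_X (i : ℕ) :
    coeff i (∏ l, (1 - C (k l) * X)) = (-1) ^ i * esymm d i k := by
  have h : ∏ l, (1 - C (k l) * X) = ∑ t ∈ univ.powerset, C (∏ l ∈ t, -k l) * X ^ #t := by
    simp_rw [sub_eq_add_neg, ← neg_mul, ← map_neg, prod_one_add, prod_mul_distrib, map_prod,
      prod_const]
  simp_rw [h, map_sum, coeff_C_mul_X_pow, ← sum_filter, esymm, mul_sum, prod_neg]
  refine sum_congr ?_ fun t ht => by rw [(mem_powersetCard.1 ht).2]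
  ext t
  simp [mem_powersetCard, eq_comm]

end PowerSeries

section Symmetric

variable {R : Type*} [CommRing R] {d : ℕ} (k : Fin d → R)

lemma sum_neg_one_pow_mul_esymm_mul_wronski {n : ℕ} (hn : 0 < n) :
    ∑ j ∈ range (n + 1), (-1) ^ j * esymm d j k * wronski d (n - j) k = 0 := by
  have h := congrArg (PowerSeries.coeff n) <| (prod_mul_distrib (s := univ)).symm.trans <|
    prod_eq_one fun l _ => one_sub_C_mul_X_mul_mk_pow (k l)
  rw [PowerSeries.coeff_mul, PowerSeries.coeff_one, if_neg hn.ne',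
    Nat.sum_antidiagonal_eq_sum_range_succ_mk] at h
  simp_rw [coeff_prod_one_sub_C_mul_X, coeff_prod_mk_pow] at h
  exact h

lemma esymm_zero : esymm d 0 k = 1 := by simp [esymm]

lemma esymm_of_lt {j : ℕ} (hj : d < j) : esymm d j k = 0 := by
  rw [esymm, powersetCard_eq_empty.2 (by rwa [card_univ, Fintype.card_fin]), sum_empty]

lemma wronski_zero : wronski d 0 k = 1 := by
  simp [wronski, Nat.antidiagonalTuple_zero_right]

end Symmetric

section Beta

variable {R : Type*} [CommRing R] {d : ℕ} (k : Fin d → R)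

lemma beta_one (m : ℕ) : beta d k m 1 = wronski d (m - d + 1) k := by
  simp [beta, esymm_zero]

lemma beta_self {i : ℕ} (hi : 1 ≤ i) : beta d k d i = (-1) ^ (i - 1) * esymm d i k := by
  obtain ⟨i, rfl⟩ := Nat.exists_eq_add_of_le' hi
  have h := sum_neg_one_pow_mul_esymm_mul_wronski k i.succ_pos
  rw [sum_range_succ, Nat.sub_self, wronski_zero] at h
  simp only [beta, Nat.sub_self, zero_add, Nat.add_sub_cancel]
  linear_combination h

lemma beta_succ_self_eq_zero {m : ℕ} (hm : d ≤ m) : beta d k m (d + 1) = 0 := by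
  rw [beta, show m - d + (d + 1) = m + 1 by omega,
    ← sum_neg_one_pow_mul_esymm_mul_wronski k m.succ_pos]
  refine sum_subset (range_subset_range.2 (by omega)) fun j _ hj => ?_
  rw [esymm_of_lt k (by simpa using hj), mul_zero, zero_mul]

lemma beta_add_one {m : ℕ} (hm : d ≤ m) (i : ℕ) :
    beta d k m (i + 1) = beta d k (m + 1) i + (-1) ^ i * esymm d i k * beta d k m 1 := by
  rw [beta_one, beta, sum_range_succ, beta, show m - d + (i + 1) = m + 1 - d + i by omega,
    Nat.add_sub_cancel, Nat.sub_add_comm hm]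

end Beta

lemma sum_Icc_mul_pow_sub_mul_self {R : Type*} [CommRing R] (d : ℕ) (c : ℕ → R) (ζ : R)
    (hc : c (d + 1) = 0) :
    (∑ i ∈ Icc 1 d, c i * ζ ^ (d - i)) * ζ =
      c 1 * ζ ^ d + ∑ i ∈ Icc 1 d, c (i + 1) * ζ ^ (d - i) := by
  have h_Icc (f : ℕ → R) : ∑ i ∈ Icc 1 d, f i = ∑ j ∈ range d, f (j + 1) := by
    rw [← Ico_add_one_right_eq_Icc, sum_Ico_eq_sum_range, Nat.add_sub_cancel]
    simp_rw [add_comm 1]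
  rw [h_Icc, h_Icc, sum_mul]
  calc ∑ j ∈ range d, c (j + 1) * ζ ^ (d - (j + 1)) * ζ
      = ∑ j ∈ range (d + 1), c (j + 1) * ζ ^ (d - j) := by
        rw [sum_range_succ, hc, zero_mul, add_zero]
        refine sum_congr rfl fun j hj => ?_
        rw [mul_assoc, ← pow_succ, show d - (j + 1) + 1 = d - j by have := mem_range.1 hj; omega]
    _ = c 1 * ζ ^ d + ∑ j ∈ range d, c (j + 1 + 1) * ζ ^ (d - (j + 1)) := by
        rw [sum_range_succ', add_comm, Nat.sub_zero]

theorem stmt7_general {R : Type*} [CommRing R] (d : ℕ) (k : Fin d → R) (ζ h : R)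
    (hrel : ζ ^ d = ∑ i ∈ Finset.Icc 1 d,
      (-1 : R) ^ (i - 1) * esymm d i k * h ^ i * ζ ^ (d - i)) :
    ∀ m, d ≤ m →
      ζ ^ m = ∑ i ∈ Finset.Icc 1 d, beta d k m i * h ^ (m - d + i) * ζ ^ (d - i) := by
  intro m hm
  induction m, hm using Nat.le_induction with
  | base =>
    rw [hrel]
    refine sum_congr rfl fun i hi => ?_
    rw [beta_self k (mem_Icc.1 hi).1, Nat.sub_self, zero_add]
  | succ m hm ih =>
    rw [pow_succ, ih, sum_Icc_mul_pow_sub_mul_self d _ ζ ?top]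
    case top => rw [beta_succ_self_eq_zero k hm, zero_mul]
    rw [hrel, mul_sum, ← sum_add_distrib, Nat.sub_add_comm hm]
    refine sum_congr rfl fun i hi => ?_
    obtain ⟨i, rfl⟩ := Nat.exists_eq_add_of_le' (mem_Icc.1 hi).1
    rw [beta_add_one k hm (i + 1), Nat.add_sub_cancel]
    ring

/-- If `ζ` satisfies `ζ^d = ∑_{i=1}^{d} (−1)^{i−1} σ_i h^i ζ^{d−i}`, then for every `m ≥ d`,
`ζ^m = ∑_{i=1}^{d} β_{m,i} h^{m−d+i} ζ^{d−i}`. -/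
theorem stmt7 {R : Type*} [CommRing R] (d : ℕ) (hd : 1 ≤ d) (k : Fin d → R) (ζ h : R)
    (hrel : ζ ^ d = ∑ i ∈ Finset.Icc 1 d,
      (-1 : R) ^ (i - 1) * esymm d i k * h ^ i * ζ ^ (d - i)) :
    ∀ m, d ≤ m →
      ζ ^ m = ∑ i ∈ Finset.Icc 1 d, beta d k m i * h ^ (m - d + i) * ζ ^ (d - i) :=
  stmt7_general d k ζ h hrel
end

section
/- Fix integers n ≥ d ≥ 2 and an integer k ≥ 1, and set ℓ = k−1. Define ν_n = − Σ_{m=0}^{n−d} Σ_{j=0}^{n−d−m} Σ_{i=0}^{m} (−1)^{n−d−i−j} (ℓ^{i−1}/(i! j!)) Ψ_n^{(i+j)}(ℓ) C(n−m−j−1, d−1), where Ψ_n(x) = (1+x)^d x^{n+1−d}. Then ν_n = −(k^d + k^{d+1} + ⋯ + k^n). -/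
open Polynomial Finset

/-!
Put `N = n - d`, `Ψ = (1 + X)^d X^(N+1)` and let `H_r` be the `r`-th Hasse derivative, so that
`Ψ^(r) = r! H_r Ψ`. Summing over `m` by the hockey-stick identity and then over `i + j = r` by
the binomial theorem turns the sum into
`∑_{r ≤ N} (-1)^(N-r) C(n-r, d) (1+ℓ)^r (H_r Ψ / X)(ℓ)`.

The operator `f ↦ ∑_{r ≤ N} (-1)^(N-r) C(d+N-r, d) (1+X)^r H_r f` multiplies `(1+X)^(d+u)` by
`∑_r (-1)^(N-r) C(d+N-r, d) C(d+u, r)`, which by Chu–Vandermonde is the coefficient of `t^N` in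
`(1+t)^(u-1)`. Expanding `Ψ = (1+X)^d ((1+X) - 1)^(N+1)`, only `u = 0` and `u = N + 1` survive, so
the operator sends `Ψ` to `(1+X)^(n+1) - (1+X)^d = X ∑_{t=d}^{n} (1+X)^t`. Cancelling `X` and
evaluating at `ℓ = k - 1` gives `∑_{t=d}^{n} k^t`.
-/

theorem coeff_zero_hasseDeriv_mul_X_pow {R : Type*} [Semiring R] (f : R[X]) {r m : ℕ}
    (h : r < m) :
    (hasseDeriv r (f * X ^ m)).coeff 0 = 0 := by
  rw [hasseDeriv_coeff, zero_add, coeff_mul_X_pow', if_neg (by omega), mul_zero]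

theorem eval_divX_iterate_derivative {R : Type*} [CommSemiring R] (f : R[X]) (r : ℕ) (x : R) :
    (derivative^[r] f).divX.eval x = r.factorial * (hasseDeriv r f).divX.eval x := by
  rw [← factorial_smul_hasseDeriv, LinearMap.smul_apply, ← divX_hom_toFun, map_nsmul, eval_smul,
    nsmul_eq_mul, divX_hom_toFun]

section HasseDeriv

variable {K : Type*} [Field K] [CharZero K]

theorem hasseDeriv_X_add_C_pow (c : K) (e r : ℕ) :
    hasseDeriv r ((X + C c) ^ e) = e.choose r • (X + C c) ^ (e - r) := by
  have h := congrFun (factorial_smul_hasseDeriv (R := K) (k := r)) ((X + C c) ^ e)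
  rw [iterate_derivative_X_add_pow, Nat.descFactorial_eq_factorial_mul_choose, mul_smul] at h
  exact smul_right_injective K[X] (Nat.factorial_ne_zero r) h

theorem one_add_X_pow_mul_hasseDeriv_one_add_X_pow (e r : ℕ) :
    (1 + X : K[X]) ^ r * hasseDeriv r ((1 + X) ^ e) = e.choose r • (1 + X) ^ e := by
  rw [add_comm, ← C_1, hasseDeriv_X_add_C_pow, mul_smul_comm]
  rcases le_or_gt r e with hre | hre
  · rw [← pow_add, Nat.add_sub_cancel' hre]
  · simp [Nat.choose_eq_zero_of_lt hre]

end HasseDeriv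

theorem sum_range_neg_one_pow_mul_choose_mul_choose (d N u : ℕ) :
    ∑ r ∈ range (N + 1), (-1 : ℤ) ^ (N - r) * (d + (N - r)).choose d * (d + u).choose r =
      Ring.choose ((u : ℤ) - 1) N := by
  have h :=
    Ring.add_choose_eq (r := ((d + u : ℕ) : ℤ)) (s := -((d + 1 : ℕ) : ℤ)) N (Commute.all _ _)
  rw [show ((d + u : ℕ) : ℤ) + -((d + 1 : ℕ) : ℤ) = (u : ℤ) - 1 by push_cast; ring,
    Nat.sum_antidiagonal_eq_sum_range_succ (fun a b => Ring.choose ((d + u : ℕ) : ℤ) a *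
      Ring.choose (-((d + 1 : ℕ) : ℤ)) b)] at h
  rw [h]
  refine sum_congr rfl fun r _ => ?_
  rw [Ring.choose_natCast, Ring.choose_neg, ← Nat.cast_add, ← Nat.cast_pred (by omega),
    Ring.choose_natCast, Int.negOnePow_def, Units.smul_def, zpow_natCast,
    show d + 1 + (N - r) - 1 = d + (N - r) by omega, Nat.choose_symm_add]
  push_cast
  ring

section WeightedHasseSum

variable {K : Type*} [Field K]

noncomputable def weightedHasseSum (d N : ℕ) : K[X] →ₗ[K] K[X] :=
  ∑ r ∈ range (N + 1), ((-1 : K) ^ (N - r) * (d + (N - r)).choose d) •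
    (LinearMap.mulLeft K ((1 + X) ^ r) ∘ₗ hasseDeriv r)

variable (d N : ℕ)

theorem weightedHasseSum_apply (f : K[X]) :
    weightedHasseSum d N f = ∑ r ∈ range (N + 1),
      ((-1 : K) ^ (N - r) * (d + (N - r)).choose d) • ((1 + X) ^ r * hasseDeriv r f) := by
  simp [weightedHasseSum]

theorem weightedHasseSum_one_add_X_pow [CharZero K] (u : ℕ) :
    weightedHasseSum d N ((1 + X : K[X]) ^ (d + u)) =
      ((Ring.choose ((u : ℤ) - 1) N : ℤ) : K) • (1 + X) ^ (d + u) := by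
  simp_rw [weightedHasseSum_apply, one_add_X_pow_mul_hasseDeriv_one_add_X_pow,
    ← Nat.cast_smul_eq_nsmul K, smul_smul, ← sum_smul]
  rw [← sum_range_neg_one_pow_mul_choose_mul_choose]
  push_cast
  rfl

theorem weightedHasseSum_one_add_X_pow_mul_X_pow [CharZero K] :
    weightedHasseSum d N ((1 + X : K[X]) ^ d * X ^ (N + 1)) =
      (1 + X) ^ (d + N + 1) - (1 + X) ^ d := by
  have hexpand : (1 + X : K[X]) ^ d * X ^ (N + 1) = ∑ u ∈ range (N + 1 + 1),
      ((-1 : K) ^ (u + (N + 1)) * (N + 1).choose u) • (1 + X) ^ (d + u) := by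
    rw [show (X : K[X]) = (1 + X) - 1 by ring, sub_pow, mul_sum]
    refine sum_congr rfl fun u _ => ?_
    simp only [smul_eq_C_mul, one_pow, mul_one, pow_add, map_mul, map_pow, map_neg, map_one,
      map_natCast]
    ring
  simp_rw [hexpand, map_sum, map_smul, weightedHasseSum_one_add_X_pow, smul_smul]
  rw [sum_range_succ, sum_range_succ']
  have hmid : ∀ u ∈ range N, ((-1 : K) ^ (u + 1 + (N + 1)) * (N + 1).choose (u + 1) *
      ((Ring.choose (((u + 1 : ℕ) : ℤ) - 1) N : ℤ) : K)) • (1 + X : K[X]) ^ (d + (u + 1)) =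
        0 := by
    intro u hu
    rw [Nat.cast_succ, add_sub_cancel_right, Ring.choose_natCast,
      Nat.choose_eq_zero_of_lt (mem_range.mp hu)]
    simp
  have hfirst : Ring.choose (((0 : ℕ) : ℤ) - 1) N = (-1) ^ N := by
    rw [Nat.cast_zero, zero_sub, Ring.choose_neg, add_sub_cancel_left, Ring.choose_natCast,
      Nat.choose_self, Int.negOnePow_def, Units.smul_def, zpow_natCast]
    simp
  have hlast : Ring.choose (((N + 1 : ℕ) : ℤ) - 1) N = 1 := by
    rw [Nat.cast_succ, add_sub_cancel_right, Ring.choose_natCast, Nat.choose_self, Nat.cast_one]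
  rw [sum_eq_zero hmid, hfirst, hlast]
  simp [← pow_add, ← two_mul, pow_mul]
  ring

theorem sum_smul_one_add_X_pow_mul_divX_hasseDeriv [CharZero K] :
    ∑ r ∈ range (N + 1), ((-1 : K) ^ (N - r) * (d + (N - r)).choose d) •
        ((1 + X) ^ r * (hasseDeriv r ((1 + X) ^ d * X ^ (N + 1))).divX) =
      ∑ t ∈ range (N + 1), (1 + X : K[X]) ^ (d + t) := by
  refine mul_left_cancel₀ (X_ne_zero (R := K)) ?_
  have hX_mul_divX : ∀ r ∈ range (N + 1),
      X * (hasseDeriv r ((1 + X : K[X]) ^ d * X ^ (N + 1))).divX =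
        hasseDeriv r ((1 + X) ^ d * X ^ (N + 1)) := by
    intro r hr
    have h := X_mul_divX_add (hasseDeriv r ((1 + X : K[X]) ^ d * X ^ (N + 1)))
    rwa [coeff_zero_hasseDeriv_mul_X_pow _ (Nat.lt_succ_iff.mpr (mem_range_succ_iff.mp hr)),
      map_zero, add_zero] at h
  have hgeom := geom_sum_mul (1 + X : K[X]) (N + 1)
  rw [add_sub_cancel_left] at hgeom
  calc X * ∑ r ∈ range (N + 1), ((-1 : K) ^ (N - r) * (d + (N - r)).choose d) •
        ((1 + X) ^ r * (hasseDeriv r ((1 + X) ^ d * X ^ (N + 1))).divX)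
      = weightedHasseSum d N ((1 + X : K[X]) ^ d * X ^ (N + 1)) := by
        rw [weightedHasseSum_apply, mul_sum]
        refine sum_congr rfl fun r hr => ?_
        rw [mul_smul_comm, mul_left_comm, hX_mul_divX r hr]
    _ = (1 + X) ^ (d + N + 1) - (1 + X) ^ d := weightedHasseSum_one_add_X_pow_mul_X_pow d N
    _ = X * ∑ t ∈ range (N + 1), (1 + X : K[X]) ^ (d + t) := by
        simp_rw [pow_add, ← mul_sum]
        linear_combination -(1 + X : K[X]) ^ d * hgeom

end WeightedHasseSum

theorem sum_Icc_add_sub_choose (c : ℕ) {a b : ℕ} (hab : a ≤ b) :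
    ∑ m ∈ Icc a b, (c + (b - m)).choose c = (c + (b - a) + 1).choose (c + 1) := by
  rw [← Nat.sum_Icc_choose]
  refine sum_nbij' (fun m => c + (b - m)) (fun s => b - (s - c)) ?_ ?_ ?_ ?_ fun _ _ => rfl <;>
    intro x hx <;> simp only [mem_Icc] at hx ⊢ <;> omega

theorem sum_range_sum_range_sum_range_comm {β : Type*} [AddCommMonoid β] (N : ℕ)
    (F : ℕ → ℕ → ℕ → β) :
    ∑ m ∈ range (N + 1), ∑ j ∈ range (N - m + 1), ∑ i ∈ range (m + 1), F m j i =
      ∑ j ∈ range (N + 1), ∑ i ∈ range (N - j + 1), ∑ m ∈ Icc i (N - j), F m j i := by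
  rw [sum_comm' (t' := range (N + 1)) (s' := fun j => range (N - j + 1))
    (by intro m j; simp only [mem_range]; omega)]
  refine sum_congr rfl fun j _ => ?_
  exact sum_comm' (by intro m i; simp only [mem_range, mem_Icc]; omega)

theorem sum_range_sum_range_mul_choose_mul_pow {R : Type*} [CommSemiring R] (N : ℕ)
    (a : ℕ → R) (x : R) :
    ∑ j ∈ range (N + 1), ∑ i ∈ range (N - j + 1), a (i + j) * ((i + j).choose i * x ^ i) =
      ∑ r ∈ range (N + 1), a r * (1 + x) ^ r := by
  rw [← sum_congr rfl fun j hj => by rw [show N - j + 1 = N + 1 - j by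
    have := mem_range.mp hj; omega], ← sum_range_diag_flip]
  refine sum_congr rfl fun r _ => ?_
  rw [add_pow, mul_sum]
  refine sum_congr rfl fun k hk => ?_
  have hkr := mem_range_succ_iff.mp hk
  rw [Nat.sub_add_cancel hkr, Nat.choose_symm hkr, one_pow, one_mul]
  ring

theorem sum_triangle_choose_mul_pow_mul_choose {R : Type*} [CommSemiring R] {d : ℕ}
    (hd : 1 ≤ d) (N : ℕ) (a : ℕ → R) (x : R) :
    ∑ m ∈ range (N + 1), ∑ j ∈ range (N - m + 1), ∑ i ∈ range (m + 1),
        a (i + j) * ((i + j).choose i * x ^ i) * ((d + N - m - j - 1).choose (d - 1) : R) =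
      ∑ r ∈ range (N + 1), a r * (d + (N - r)).choose d * (1 + x) ^ r := by
  have hockey : ∀ i j, i + j ≤ N →
      ∑ m ∈ Icc i (N - j), (d + N - m - j - 1).choose (d - 1) =
        (d + (N - (i + j))).choose d := by
    intro i j hij
    rw [sum_congr rfl fun m hm => by
      rw [show d + N - m - j - 1 = d - 1 + (N - j - m) by have := mem_Icc.mp hm; omega],
      sum_Icc_add_sub_choose _ (by omega)]
    congr 1 <;> omega
  rw [sum_range_sum_range_sum_range_comm]
  simp_rw [← mul_sum]
  rw [← sum_range_sum_range_mul_choose_mul_pow N (fun r => a r * (d + (N - r)).choose d)]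
  refine sum_congr rfl fun j hj => sum_congr rfl fun i hi => ?_
  rw [← Nat.cast_sum, hockey i j (by have := mem_range.mp hi; have := mem_range.mp hj; omega)]
  ring

theorem stmt12_general (n d k : ℕ) (hd : 2 ≤ d) (hdn : d ≤ n) :
    -(∑ m ∈ Finset.range (n - d + 1), ∑ j ∈ Finset.range (n - d - m + 1),
        ∑ i ∈ Finset.range (m + 1),
          (-1 : ℝ) ^ (n - d - i - j) *
            (((k : ℝ) - 1) ^ i *
              ((Polynomial.derivative^[i + j]
                  ((1 + X : ℝ[X]) ^ d * X ^ (n + 1 - d))).divX.eval ((k : ℝ) - 1))) /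
            (Nat.factorial i * Nat.factorial j) *
            ((n - m - j - 1).choose (d - 1) : ℝ)) =
      -(∑ t ∈ Finset.Icc d n, (k : ℝ) ^ t) := by
  obtain ⟨N, rfl⟩ := Nat.exists_eq_add_of_le hdn
  set ℓ : ℝ := (k : ℝ) - 1
  set a : ℕ → ℝ := fun r =>
    (-1) ^ (N - r) * (hasseDeriv r ((1 + X : ℝ[X]) ^ d * X ^ (N + 1))).divX.eval ℓ
  have hterm : ∀ i j, (-1 : ℝ) ^ (N - i - j) * (ℓ ^ i *
      (derivative^[i + j] ((1 + X : ℝ[X]) ^ d * X ^ (N + 1))).divX.eval ℓ) /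
      (i.factorial * j.factorial) = a (i + j) * ((i + j).choose i * ℓ ^ i) := by
    intro i j
    rw [Nat.sub_sub, eval_divX_iterate_derivative, Nat.cast_add_choose]
    field_simp
    ring
  simp only [Nat.add_sub_cancel_left, show d + N + 1 - d = N + 1 by omega, hterm,
    sum_triangle_choose_mul_pow_mul_choose (by omega : 1 ≤ d)]
  have hpoly := congrArg (eval ℓ) (sum_smul_one_add_X_pow_mul_divX_hasseDeriv (K := ℝ) d N)
  simp only [eval_finsetSum, eval_smul, eval_mul, eval_pow, eval_add, eval_one, eval_X,
    smul_eq_mul] at hpoly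
  rw [neg_inj, ← Ico_add_one_right_eq_Icc, sum_Ico_eq_sum_range,
    show d + N + 1 - d = N + 1 by omega, show (k : ℝ) = 1 + ℓ by ring, ← hpoly]
  refine sum_congr rfl fun r _ => ?_
  ring

/-- Lemma 5(i): with `Ψ_n(x) = (1+x)^d x^{n+1−d}`, `2 ≤ d ≤ n`, `k ≥ 1` and `ℓ = k−1`,
`ν_n = −∑_{m=0}^{n−d}∑_{j=0}^{n−d−m}∑_{i=0}^{m} (−1)^{n−d−i−j} (ℓ^{i−1}/(i!j!)) Ψ_n^{(i+j)}(ℓ)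
C(n−m−j−1, d−1)` equals `−(k^d + ⋯ + k^n)`.  The factor `ℓ^{i−1} Ψ_n^{(i+j)}(ℓ)` is
interpreted via the polynomial expansion, i.e. as `ℓ^i · (Ψ_n^{(i+j)}/x)(ℓ)` using that
`Ψ_n^{(i+j)}` has zero constant term (`Polynomial.divX`). -/
theorem stmt12 (n d k : ℕ) (hd : 2 ≤ d) (hdn : d ≤ n) (hk : 1 ≤ k) :
    -(∑ m ∈ Finset.range (n - d + 1), ∑ j ∈ Finset.range (n - d - m + 1),
        ∑ i ∈ Finset.range (m + 1),
          (-1 : ℝ) ^ (n - d - i - j) *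
            (((k : ℝ) - 1) ^ i *
              ((Polynomial.derivative^[i + j]
                  ((1 + X : ℝ[X]) ^ d * X ^ (n + 1 - d))).divX.eval ((k : ℝ) - 1))) /
            (Nat.factorial i * Nat.factorial j) *
            ((n - m - j - 1).choose (d - 1) : ℝ)) =
      -(∑ t ∈ Finset.Icc d n, (k : ℝ) ^ t) :=
  stmt12_general n d k hd hdn
end

section
/- Let n ≥ d ≥ 2 and k ≥ 1, ℓ = k−1. With ψ_a(x) = (1+x)^{d−a_1} x^{n−d−a_2−1} and σ_{a_1}^{(d)} = C(d,a_1), τ_{a_2}^{(d)} = C(n+1−d, a_2), W_δ^{(d)} = C(δ+d−1, d−1) (all symmetric functions evaluated at k_1=⋯=k_d=1), one has Σ_{|a|=0}^{n−d} Σ_{m=0}^{n−d−|a|} (−1)^{n−d−|a|−m} (ψ_a^{(m)}(ℓ)/m!) (k−1)^m C(d,a_1) C(n+1−d,a_2) C(n−d−|a|−m+d−1, d−1) = (n+1−d)(1 + k + ⋯ + k^{d−1}). -/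
/-!
Swap the sums over `a₁` and `a₂`. For `a₂ = n − d` only `a₁ = m = 0` survives, and it contributes
`(n + 1 − d) · ((1 + ℓ)^d − 1)/ℓ`. For `a₂ < n − d` put `N = n − d − a₂ ≥ 1`: the numbers
`ψ_a^{(m)}(ℓ) ℓ^m / m!` are the coefficients of `ψ_a(ℓ(1 + X))` and `(−1)^j C(j + d − 1, d − 1)` are
those of `(1 + X)^{−d}`, so the sum over `a₁, m` is the coefficient of `X^N` in
`(∑ C(d, a₁) X^{a₁} ψ_a(ℓ(1 + X))) · (1 + X)^{−d}`. By the binomial theorem the first factor is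
`(1 + ℓ)^d ℓ^{N−1} (1 + X)^{d+N−1}`, so the product is a multiple of `(1 + X)^{N−1}`, whose
coefficient of `X^N` is `0`.
-/
open Finset Polynomial
open scoped PowerSeries

namespace Polynomial

variable {R : Type*} [CommRing R]

theorem divX_mul_X (p : R[X]) : divX (p * X) = p := by
  ext n
  rw [coeff_divX, coeff_mul_X]

theorem eval_divX_one_add_X_pow (d : ℕ) (x : R) :
    (divX ((1 + X : R[X]) ^ d)).eval x = ∑ t ∈ range d, (1 + x) ^ t := by
  have h : (1 + X : R[X]) ^ d = 1 + (∑ t ∈ range d, (1 + X) ^ t) * X := by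
    have := geom_sum_mul (1 + X : R[X]) d
    rw [add_sub_cancel_left] at this
    rw [this]; ring
  rw [h, divX_add, divX_one, zero_add, divX_mul_X, eval_finsetSum]
  simp

theorem sum_choose_mul_X_pow_comp_eq (d e : ℕ) (ℓ : R) :
    ∑ a ∈ range (d + 1), C (d.choose a : R) * X ^ a *
        ((1 + X) ^ (d - a) * X ^ e).comp (C ℓ * (1 + X)) =
      C ((1 + ℓ) ^ d * ℓ ^ e) * (1 + X) ^ (d + e) := by
  have hbase : X + (1 + C ℓ * (1 + X)) = C (1 + ℓ) * (1 + X : R[X]) := by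
    rw [C_add, C_1]; ring
  have hrhs : C ((1 + ℓ) ^ d * ℓ ^ e) * (1 + X) ^ (d + e) =
      (X + (1 + C ℓ * (1 + X))) ^ d * (C ℓ * (1 + X)) ^ e := by
    rw [hbase, C_mul, C_pow, C_pow, mul_pow, mul_pow, pow_add]; ring
  simp only [mul_comp, pow_comp, add_comp, one_comp, X_comp]
  rw [hrhs, add_pow, sum_mul]
  refine sum_congr rfl fun a _ => ?_
  rw [← C_eq_natCast]
  ring

variable {K : Type*} [Field K] [CharZero K]

theorem coeff_comp_C_mul_one_add_X (p : K[X]) (ℓ : K) (m : ℕ) :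
    (p.comp (C ℓ * (1 + X))).coeff m = (derivative^[m] p).eval ℓ / m.factorial * ℓ ^ m := by
  have h : p.comp (C ℓ * (1 + X)) = (taylor ℓ p).comp (C ℓ * X) := by
    rw [taylor_apply, comp_assoc, add_comp, X_comp, C_comp, mul_add, mul_one, add_comm]
  rw [h, comp_C_mul_X_coeff, taylor_coeff, ← factorial_smul_hasseDeriv, LinearMap.smul_apply,
    eval_smul, nsmul_eq_mul, mul_div_cancel_left₀ _ (Nat.cast_ne_zero.2 m.factorial_ne_zero)]

end Polynomial

namespace PowerSeries

variable {R : Type*} [CommRing R]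

theorem one_add_X_pow_mul_mk_neg_one_pow_choose (c : ℕ) :
    (1 + X : R⟦X⟧) ^ (c + 1) * mk (fun j => (-1) ^ j * ((c + j).choose c : R)) = 1 := by
  have h := congrArg (rescale (-1 : R)) (mk_add_choose_mul_one_sub_pow_eq_one (S := R) (d := c))
  rw [map_mul, map_pow, map_sub, map_one, rescale_neg_one_X, rescale_mk, sub_neg_eq_add] at h
  rw [mul_comm]
  simpa using h

theorem coeff_X_pow_mul_mul_mk {a N : ℕ} (h : a ≤ N) (φ : R⟦X⟧) (w : ℕ → R) :
    coeff N (X ^ a * (φ * mk w)) = ∑ m ∈ range (N - a + 1), coeff m φ * w (N - a - m) := by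
  rw [coeff_X_pow_mul', if_pos h, coeff_mul, Nat.sum_antidiagonal_eq_sum_range_succ_mk]
  simp

end PowerSeries

theorem sum_taylor_mul_choose_eq_zero {K : Type*} [Field K] [CharZero K] {d N : ℕ} (hd : 0 < d)
    (hN : 0 < N) (ℓ : K) :
    ∑ a ∈ range (N + 1), ∑ m ∈ range (N - a + 1),
      (-1 : K) ^ (N - a - m) *
        ((derivative^[m] ((1 + X : K[X]) ^ (d - a) * X ^ (N - 1))).eval ℓ / m.factorial) *
        ℓ ^ m * (d.choose a : K) * ((N - a - m + d - 1).choose (d - 1) : K) = 0 := by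
  obtain ⟨c, rfl⟩ : ∃ c, d = c + 1 := ⟨d - 1, by omega⟩
  set W : K⟦X⟧ := PowerSeries.mk fun j => (-1) ^ j * ((c + j).choose c : K)
  set Q : ℕ → K[X] := fun a => ((1 + X) ^ (c + 1 - a) * X ^ (N - 1)).comp (C ℓ * (1 + X))
  set F : ℕ → K[X] := fun a => C ((c + 1).choose a : K) * X ^ a * Q a
  have hF (a : ℕ) : (F a : K⟦X⟧) * W =
      PowerSeries.C ((c + 1).choose a : K) * (PowerSeries.X ^ a * ((Q a : K⟦X⟧) * W)) := by
    simp only [F]; push_cast; ring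
  have hterm : ∀ a ∈ range (N + 1), ∑ m ∈ range (N - a + 1),
      (-1 : K) ^ (N - a - m) *
        ((derivative^[m] ((1 + X : K[X]) ^ (c + 1 - a) * X ^ (N - 1))).eval ℓ / m.factorial) *
        ℓ ^ m * ((c + 1).choose a : K) * ((N - a - m + (c + 1) - 1).choose (c + 1 - 1) : K) =
      PowerSeries.coeff N ((F a : K⟦X⟧) * W) := by
    intro a ha
    rw [hF, PowerSeries.coeff_C_mul,
      PowerSeries.coeff_X_pow_mul_mul_mk (Nat.lt_succ_iff.1 (mem_range.1 ha)), mul_sum]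
    refine sum_congr rfl fun m _ => ?_
    rw [Polynomial.coeff_coe, coeff_comp_C_mul_one_add_X,
      show N - a - m + (c + 1) - 1 = c + (N - a - m) by omega, Nat.add_sub_cancel]
    ring
  have hvanish (a : ℕ) (ha : N < a ∨ c + 1 < a) :
      PowerSeries.coeff N ((F a : K⟦X⟧) * W) = 0 := by
    rw [hF, PowerSeries.coeff_C_mul, PowerSeries.coeff_X_pow_mul']
    rcases ha with ha | ha
    · rw [if_neg (by omega), mul_zero]
    · rw [Nat.choose_eq_zero_of_lt ha, Nat.cast_zero, zero_mul]
  calc _ = ∑ a ∈ range (N + 1), PowerSeries.coeff N ((F a : K⟦X⟧) * W) :=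
        sum_congr rfl hterm
    _ = ∑ a ∈ range (c + 2), PowerSeries.coeff N ((F a : K⟦X⟧) * W) := by
      rw [sum_subset (range_subset_range.2 (by omega : N + 1 ≤ N + c + 2))
          fun a _ ha => hvanish a (Or.inl (by rw [mem_range] at ha; omega)),
        sum_subset (range_subset_range.2 (by omega : c + 2 ≤ N + c + 2))
          fun a _ ha => hvanish a (Or.inr (by rw [mem_range] at ha; omega))]
    _ = PowerSeries.coeff N (((∑ a ∈ range (c + 2), F a : K[X]) : K⟦X⟧) * W) := by
      rw [← Polynomial.coeToPowerSeries.ringHom_apply, map_sum, sum_mul, map_sum]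
      rfl
    _ = PowerSeries.coeff N (((C ((1 + ℓ) ^ (c + 1) * ℓ ^ (N - 1)) * (1 + X) ^ (N - 1) :
          K[X]) : K⟦X⟧) * ((1 + PowerSeries.X) ^ (c + 1) * W)) := by
      simp only [F, Q]
      rw [sum_choose_mul_X_pow_comp_eq]
      push_cast
      congr 1
      ring
    _ = 0 := by
      rw [PowerSeries.one_add_X_pow_mul_mk_neg_one_pow_choose, mul_one, Polynomial.coeff_coe,
        Polynomial.coeff_C_mul, Polynomial.coeff_one_add_X_pow,
        Nat.choose_eq_zero_of_lt (by omega), Nat.cast_zero, mul_zero]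

theorem stmt13_general (n d k : ℕ) (hd : 2 ≤ d) (hdn : d ≤ n) :
    ∑ a1 ∈ Finset.range (n - d + 1), ∑ a2 ∈ Finset.range (n - d - a1 + 1),
        ∑ m ∈ Finset.range (n - d - a1 - a2 + 1),
          (-1 : ℝ) ^ (n - d - (a1 + a2) - m) *
            ((Polynomial.derivative^[m]
                (((1 + X : ℝ[X]) ^ (d - a1) * X ^ (n - d - a2)).divX)).eval ((k : ℝ) - 1) /
              (Nat.factorial m)) *
            ((k : ℝ) - 1) ^ m * (d.choose a1 : ℝ) * ((n + 1 - d).choose a2 : ℝ) *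
            ((n - d - (a1 + a2) - m + d - 1).choose (d - 1) : ℝ) =
      ((n + 1 - d : ℕ) : ℝ) * ∑ t ∈ Finset.range d, (k : ℝ) ^ t := by
  set N := n - d
  rw [show n + 1 - d = N + 1 by omega,
    sum_comm' (t' := range (N + 1)) (s' := fun a2 => range (N - a2 + 1))
      (fun a1 a2 => by simp only [mem_range]; omega),
    sum_range_succ, sum_eq_zero, zero_add]
  · simp [eval_divX_one_add_X_pow, mul_comm]
  · intro a2 ha2
    have hN : 0 < N - a2 := Nat.sub_pos_of_lt (mem_range.1 ha2)
    calc _ = ((N + 1).choose a2 : ℝ) * ∑ a1 ∈ range (N - a2 + 1), ∑ m ∈ range (N - a2 - a1 + 1),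
          (-1 : ℝ) ^ (N - a2 - a1 - m) *
            ((derivative^[m] ((1 + X : ℝ[X]) ^ (d - a1) * X ^ (N - a2 - 1))).eval ((k : ℝ) - 1) /
              m.factorial) * ((k : ℝ) - 1) ^ m * (d.choose a1 : ℝ) *
            ((N - a2 - a1 - m + d - 1).choose (d - 1) : ℝ) := by
          rw [mul_sum]
          refine sum_congr rfl fun a1 _ => ?_
          rw [mul_sum, Nat.sub_right_comm]
          refine sum_congr rfl fun m _ => ?_
          rw [← pow_sub_one_mul hN.ne', ← mul_assoc, divX_mul_X,
            show N - (a1 + a2) = N - a2 - a1 by omega]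
          ring
      _ = 0 := by rw [sum_taylor_mul_choose_eq_zero (by omega) hN, mul_zero]

/-- Lemma 5(ii): with all symmetric functions evaluated at `k₁=⋯=k_d=1`
(`σ_{a₁} = C(d,a₁)`, `τ_{a₂} = C(n+1−d,a₂)`, `W_δ = C(δ+d−1,d−1)`), `ℓ = k−1`, and
`ψ_a(x) = (1+x)^{d−a₁} x^{n−d−a₂−1}` (interpreted via the polynomial expansion, i.e.
`divX ((1+x)^{d−a₁} x^{n−d−a₂})`), one has
`∑_{|a|=0}^{n−d} ∑_{m=0}^{n−d−|a|} (−1)^{n−d−|a|−m} (ψ_a^{(m)}(ℓ)/m!) (k−1)^m C(d,a₁)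
C(n+1−d,a₂) C(n−d−|a|−m+d−1, d−1) = (n+1−d)(1+k+⋯+k^{d−1})`. -/
theorem stmt13 (n d k : ℕ) (hd : 2 ≤ d) (hdn : d ≤ n) (hk : 1 ≤ k) :
    ∑ a1 ∈ Finset.range (n - d + 1), ∑ a2 ∈ Finset.range (n - d - a1 + 1),
        ∑ m ∈ Finset.range (n - d - a1 - a2 + 1),
          (-1 : ℝ) ^ (n - d - (a1 + a2) - m) *
            ((Polynomial.derivative^[m]
                (((1 + X : ℝ[X]) ^ (d - a1) * X ^ (n - d - a2)).divX)).eval ((k : ℝ) - 1) /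
              (Nat.factorial m)) *
            ((k : ℝ) - 1) ^ m * (d.choose a1 : ℝ) * ((n + 1 - d).choose a2 : ℝ) *
            ((n - d - (a1 + a2) - m + d - 1).choose (d - 1) : ℝ) =
      ((n + 1 - d : ℕ) : ℝ) * ∑ t ∈ Finset.range d, (k : ℝ) ^ t :=
  stmt13_general n d k hd hdn
end

section
/- Let X(z) = Σ_{j=1}^{n} P_j(z) ∂/∂z_j be a polynomial vector field on ℂ^n, let W = {z_1 = ⋯ = z_d = 0}, and let m_i denote the order of vanishing of P_i along W (the least total degree in z_1,…,z_d appearing in P_i). Then there exists an invertible linear change of coordinates w = Az, with A block-lower-triangular preserving W (a_{ij} = 0 for 1 ≤ i ≤ d, d+1 ≤ j ≤ n), such that in the new coordinates the components Q_j satisfy: the vanishing order of Q_j along W equals min{m_1,…,m_d} for 1 ≤ j ≤ d, and equals min{m_1,…,m_n} for d+1 ≤ j ≤ n, for a generic choice of A. -/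
/-!
Measured against the weight that gives `z₁, …, z_d` degree one and the other variables
degree zero, `ordW` is a weighted order. A linear substitution whose matrix maps `W` into
itself is block triangular for this weight and cannot lower the order; since the inverse of
such a matrix is again of this shape, an invertible one preserves it, and `Q_i` has the
order of the combination `∑ⱼ a_{ij} P_j`. Pick `j₀ < d` of minimal order among the first
`d` components and `j₁` of minimal order among all of them (taken to be `j₀` when
possible). Let `A` add `P_{j₀}` to row `i < d` and `P_{j₁}` to row `i ≥ d` whenever the
added component has strictly smaller order, which the sum then inherits. The rows `j₀` and
`j₁` are themselves left alone, so `A = 1 + E` with `E² = 0`.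
-/

open MvPolynomial

/-- The order of vanishing of a polynomial along `W = {z₁ = ⋯ = z_d = 0}`: the least
total degree in the first `d` variables appearing in a monomial of `P` (and `∞` for
the zero polynomial). -/
noncomputable def ordW (n d : ℕ) (P : MvPolynomial (Fin n) ℂ) : ℕ∞ :=
  P.support.inf fun s =>
    ((∑ j ∈ Finset.univ.filter (fun j : Fin n => (j : ℕ) < d), s j : ℕ) : ℕ∞)

theorem Finsupp.natCast_weight_le_weight {σ : Type*} {w : σ → ℕ} {v : σ → ℕ∞}
    (h : ∀ t, (w t : ℕ∞) ≤ v t) (d : σ →₀ ℕ) :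
    (Finsupp.weight w d : ℕ∞) ≤ Finsupp.weight v d := by
  simp only [Finsupp.weight_apply, Finsupp.sum, nsmul_eq_mul]
  push_cast
  gcongr with t
  exact h t

namespace MvPolynomial

variable {σ R : Type*} [Fintype σ] [CommRing R]

noncomputable def linearSubst (M : Matrix σ σ R) : MvPolynomial σ R →ₐ[R] MvPolynomial σ R :=
  aeval fun t => ∑ s, C (M t s) * X s

theorem linearSubst_linearSubst (M N : Matrix σ σ R) (p : MvPolynomial σ R) :
    linearSubst M (linearSubst N p) = linearSubst (N * M) p := by
  rw [← AlgHom.comp_apply]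
  congr 1
  refine algHom_ext fun j => ?_
  simp only [linearSubst, AlgHom.comp_apply, aeval_X, map_sum, map_mul, algHom_C, algebraMap_eq,
    Matrix.mul_apply, Finset.mul_sum, Finset.sum_mul, mul_assoc]
  exact Finset.sum_comm

theorem linearSubst_one [DecidableEq σ] (p : MvPolynomial σ R) : linearSubst 1 p = p := by
  simp [linearSubst, Matrix.one_apply]

theorem coe_linearSubst (M : Matrix σ σ R) (p : MvPolynomial σ R) :
    (linearSubst M p : MvPowerSeries σ R) =
      MvPowerSeries.subst (fun t => ∑ s, MvPowerSeries.C (M t s) * MvPowerSeries.X s)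
        (p : MvPowerSeries σ R) := by
  rw [MvPowerSeries.subst_coe, linearSubst]
  have := comp_aeval_apply (f := fun t => ∑ s, C (M t s) * X s) (coeToMvPowerSeries.algHom R) p
  simp only [coeToMvPowerSeries.algHom_apply, map_sum, map_mul, Algebra.algebraMap_self,
    MvPowerSeries.map_id, RingHom.id_apply, coe_C, coe_X] at this
  exact this

section WeightedOrder

variable (w : σ → ℕ)

theorem le_weightedOrder_linearForm {B : Matrix σ σ R} (hB : B.BlockTriangular w) (t : σ) :
    (w t : ℕ∞) ≤
      (∑ s, MvPowerSeries.C (B t s) * MvPowerSeries.X s : MvPowerSeries σ R).weightedOrder w := by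
  classical
  refine MvPowerSeries.le_weightedOrder w fun e he => ?_
  simp only [map_sum, MvPowerSeries.coeff_C_mul, MvPowerSeries.coeff_X]
  refine Finset.sum_eq_zero fun s _ => ?_
  split_ifs with hes
  · subst hes
    rw [Finsupp.weight_single, one_smul, Nat.cast_lt] at he
    simp [hB he]
  · simp

theorem le_weightedOrder_linearSubst {B : Matrix σ σ R} (hB : B.BlockTriangular w)
    (p : MvPolynomial σ R) :
    (p : MvPowerSeries σ R).weightedOrder w ≤
      (linearSubst B p : MvPowerSeries σ R).weightedOrder w := by
  rw [coe_linearSubst]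
  refine le_trans ?_ (MvPowerSeries.le_weightedOrder_subst w
    (MvPowerSeries.hasSubst_of_constantCoeff_zero fun t => ?_) _)
  · exact le_iInf₂ fun e he => (MvPowerSeries.weightedOrder_le w he).trans
      (Finsupp.natCast_weight_le_weight (le_weightedOrder_linearForm w hB) e)
  · simp

theorem weightedOrder_linearSubst_inv [DecidableEq σ] {A : Matrix σ σ R}
    (hA : A.BlockTriangular w) (hdet : IsUnit A.det) (p : MvPolynomial σ R) :
    (linearSubst A⁻¹ p : MvPowerSeries σ R).weightedOrder w =
      (p : MvPowerSeries σ R).weightedOrder w := by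
  let := A.invertibleOfIsUnitDet hdet
  refine le_antisymm ?_ (le_weightedOrder_linearSubst w
    (Matrix.blockTriangular_inv_of_blockTriangular hA) p)
  calc _ ≤ (linearSubst A (linearSubst A⁻¹ p) : MvPowerSeries σ R).weightedOrder w :=
        le_weightedOrder_linearSubst w hA _
    _ = _ := by rw [linearSubst_linearSubst, Matrix.inv_mul_of_invertible, linearSubst_one]

end WeightedOrder

end MvPolynomial

namespace Matrix

variable {ι R : Type*} [DecidableEq ι]

def pivotMatrix [Zero R] [One R] (c : ι → ι) (p : ι → Prop) [DecidablePred p] : Matrix ι ι R :=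
  of fun i j => if p i ∧ j = c i then 1 else 0

variable {c : ι → ι} {p : ι → Prop} [DecidablePred p]

theorem pivotMatrix_mul_self [Fintype ι] [Semiring R] (h : ∀ i, ¬ p (c i)) :
    pivotMatrix c p * pivotMatrix c p = (0 : Matrix ι ι R) := by
  ext i k
  refine Finset.sum_eq_zero fun j _ => ?_
  simp only [pivotMatrix, of_apply, mul_ite, mul_one, mul_zero]
  split_ifs with hj hi
  exacts [absurd (hi.2 ▸ hj.1) (h i), rfl, rfl]

theorem isUnit_det_one_add_pivotMatrix [Fintype ι] [CommRing R] (h : ∀ i, ¬ p (c i)) :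
    IsUnit (1 + pivotMatrix c p : Matrix ι ι R).det :=
  isUnit_det_of_right_inverse (B := 1 - pivotMatrix c p) <| by
    rw [show ∀ E : Matrix ι ι R, (1 + E) * (1 - E) = 1 - E * E by intro E; noncomm_ring,
      pivotMatrix_mul_self h, sub_zero]

theorem blockTriangular_pivotMatrix [Zero R] [One R] {α : Type*} [LT α] {b : ι → α}
    (h : ∀ i, p i → ¬ b (c i) < b i) : BlockTriangular (pivotMatrix c p : Matrix ι ι R) b := by
  intro i j hji
  simp only [pivotMatrix, of_apply, ite_eq_right_iff, and_imp]
  rintro hi rfl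
  exact absurd hji (h i hi)

theorem sum_one_add_pivotMatrix_smul [Fintype ι] [Semiring R] {M : Type*} [AddCommMonoid M]
    [Module R M] (v : ι → M) (i : ι) :
    ∑ j, (1 + pivotMatrix c p : Matrix ι ι R) i j • v j = v i + if p i then v (c i) else 0 := by
  simp [pivotMatrix, add_smul, Finset.sum_add_distrib, one_apply, ite_and]

end Matrix

open Matrix

def weightW (n d : ℕ) : Fin n → ℕ := fun j => if (j : ℕ) < d then 1 else 0

theorem ordW_eq_weightedOrder (n d : ℕ) (P : MvPolynomial (Fin n) ℂ) :
    ordW n d P = (P : MvPowerSeries (Fin n) ℂ).weightedOrder (weightW n d) := by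
  have hweight : ∀ s : Fin n →₀ ℕ, Finsupp.weight (weightW n d) s =
      ∑ j ∈ Finset.univ.filter (fun j : Fin n => (j : ℕ) < d), s j := by
    intro s
    simp [Finsupp.weight_eq_sum, weightW, Finset.sum_filter]
  refine le_antisymm ?_ (Finset.le_inf fun s hs => ?_)
  · refine MvPowerSeries.le_weightedOrder _ fun s hs => ?_
    rw [coeff_coe, ← notMem_support_iff]
    intro hsP
    rw [hweight] at hs
    exact hs.not_ge (Finset.inf_le hsP)
  · rw [← hweight]
    exact MvPowerSeries.weightedOrder_le _ (by rwa [coeff_coe, ← mem_support_iff])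

theorem ordW_add_eq_right {n d : ℕ} {P Q : MvPolynomial (Fin n) ℂ}
    (h : ordW n d Q < ordW n d P) : ordW n d (P + Q) = ordW n d Q := by
  simp only [ordW_eq_weightedOrder] at h ⊢
  rw [coe_add, MvPowerSeries.weightedOrder_add_of_weightedOrder_ne _ h.ne', min_eq_right h.le]

theorem exists_idempotent_argmin {α : Type*} [LinearOrder α] [OrderTop α] {n d : ℕ}
    (hd : 0 < d) (hn : 0 < n) (f : Fin n → α) :
    ∃ c : Fin n → Fin n, (∀ i, c (c i) = c i) ∧ (∀ i : Fin n, (i : ℕ) < d → (c i : ℕ) < d) ∧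
      ∀ i : Fin n, f (c i) = if (i : ℕ) < d then
        (Finset.univ.filter (fun j : Fin n => (j : ℕ) < d)).inf f else Finset.univ.inf f := by
  obtain ⟨j₀, hj₀, hf₀⟩ := Finset.exists_mem_eq_inf
    (Finset.univ.filter (fun j : Fin n => (j : ℕ) < d)) ⟨⟨0, by omega⟩, by simp; omega⟩ f
  obtain ⟨j, -, hf⟩ := Finset.exists_mem_eq_inf Finset.univ ⟨j₀, Finset.mem_univ _⟩ f
  rw [Finset.mem_filter] at hj₀
  obtain ⟨j₁, hf₁, hj₁⟩ : ∃ j₁, f j₁ = Finset.univ.inf f ∧ ((j₁ : ℕ) < d → j₁ = j₀) := by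
    by_cases hlt : f j < f j₀
    · refine ⟨j, hf.symm, fun hjd => absurd hlt (not_lt.mpr ?_)⟩
      exact hf₀ ▸ Finset.inf_le (by simp [hjd])
    · exact ⟨j₀, le_antisymm (hf ▸ not_lt.mp hlt) (Finset.inf_le (Finset.mem_univ _)), fun _ => rfl⟩
  refine ⟨fun i => if (i : ℕ) < d then j₀ else j₁, fun i => ?_, fun i hi => by simp [hi, hj₀.2],
    fun i => by dsimp only; split_ifs; exacts [hf₀.symm, hf₁]⟩
  by_cases hi : (i : ℕ) < d
  · simp [hi, hj₀.2]
  · by_cases h₁ : (j₁ : ℕ) < d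
    · simp [hi, hj₁ h₁, hj₀.2]
    · simp [hi, h₁]

/-- Lemma 1: for a polynomial vector field `X = ∑ P_j ∂/∂z_j` there is an invertible
linear change of coordinates `w = Az`, block-triangular preserving
`W = {z₁ = ⋯ = z_d = 0}`, whose new components `Q_i(w) = ∑_j a_{ij} P_j(A⁻¹ w)` vanish
along `W` to order `min{m₁,…,m_d}` for `1 ≤ i ≤ d` and `min{m₁,…,m_n}` for
`d+1 ≤ i ≤ n`, where `m_i = m_W(P_i)`. -/
theorem stmt14 (n d : ℕ) (hd : 1 ≤ d) (hdn : d ≤ n)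
    (P : Fin n → MvPolynomial (Fin n) ℂ) :
    ∃ A : Matrix (Fin n) (Fin n) ℂ, IsUnit A.det ∧
      (∀ i j : Fin n, (i : ℕ) < d → d ≤ (j : ℕ) → A i j = 0) ∧
      (∀ i : Fin n,
        ordW n d (∑ j : Fin n, MvPolynomial.C (A i j) *
            MvPolynomial.aeval
              (fun t : Fin n => ∑ s : Fin n, MvPolynomial.C (A⁻¹ t s) * MvPolynomial.X s)
              (P j)) =
          if (i : ℕ) < d then
            (Finset.univ.filter (fun j : Fin n => (j : ℕ) < d)).inf fun j => ordW n d (P j)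
          else
            Finset.univ.inf fun j => ordW n d (P j)) := by
  classical
  set f := fun j => ordW n d (P j)
  obtain ⟨c, hcc, hcd, hfc⟩ := exists_idempotent_argmin hd (Nat.lt_of_lt_of_le hd hdn) f
  have hfc_le : ∀ i, f (c i) ≤ f i := fun i => by
    rw [hfc]; split_ifs with hi
    exacts [Finset.inf_le (by simp [hi]), Finset.inf_le (Finset.mem_univ i)]
  set A : Matrix (Fin n) (Fin n) ℂ := 1 + pivotMatrix c fun i => f (c i) < f i
  have hpiv : ∀ i, ¬ f (c (c i)) < f (c i) := fun i => by rw [hcc]; exact lt_irrefl _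
  have hA : A.BlockTriangular (weightW n d) := blockTriangular_one.add <|
    blockTriangular_pivotMatrix fun i _ => by
      by_cases hi : (i : ℕ) < d
      · simp [weightW, hi, hcd i hi]
      · simp [weightW, hi]
  have hdet : IsUnit A.det := isUnit_det_one_add_pivotMatrix hpiv
  refine ⟨A, hdet, fun i j hi hj => hA (by simp [weightW, hi, hj.not_gt]), fun i => ?_⟩
  have hrow : ∑ j, C (A i j) * linearSubst A⁻¹ (P j) =
      linearSubst A⁻¹ (P i + if f (c i) < f i then P (c i) else 0) := by
    simp only [C_mul', ← map_smul, ← map_sum, sum_one_add_pivotMatrix_smul, A]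
  change ordW n d (∑ j, C (A i j) * linearSubst A⁻¹ (P j)) = _
  rw [hrow, ordW_eq_weightedOrder, weightedOrder_linearSubst_inv _ hA hdet,
    ← ordW_eq_weightedOrder, ← hfc]
  split_ifs with hlt
  · exact ordW_add_eq_right hlt
  · exact (add_zero (P i)).symm ▸ le_antisymm (not_lt.mp hlt) (hfc_le i)
end
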